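/- arXiv:0911.1298 — 6 statements merged into one kernel-verified Lean document; each statement's English description precedes it below -/
import Mathlib

section
/- The set of all minors (of all orders 0 through ℓ, where the 0×0 minor is the constant polynomial 1) of an ℓ×ℓ' generic matrix X of independent indeterminates over a field F is linearly independent in the polynomial ring F[X]. -/
open MvPolynomial

/-- The minor of the generic `ℓ × ℓ'` matrix of indeterminates determined by the
rows `r` and columns `c`. -/
noncomputable def genMinor {F : Type*} [Field F] (ℓ ℓ' k : ℕ)
    (r : Fin k → Fin ℓ) (c : Fin k → Fin ℓ') : MvPolynomial (Fin ℓ × Fin ℓ') F :=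
  (Matrix.of fun i j => (X (r i, c j) : MvPolynomial (Fin ℓ × Fin ℓ') F)).det

/-- The set of all minors (of all orders `0 ≤ k ≤ ℓ`, the order-`0` minor being `1`)
of the generic `ℓ × ℓ'` matrix, as elements of the polynomial ring. -/
def minorSet (F : Type*) [Field F] (ℓ ℓ' : ℕ) : Set (MvPolynomial (Fin ℓ × Fin ℓ') F) :=
  {p | ∃ (k : ℕ) (r : Fin k → Fin ℓ) (c : Fin k → Fin ℓ'),
    StrictMono r ∧ StrictMono c ∧ p = genMinor ℓ ℓ' k r c}

namespace MinorAux

set_option linter.unusedSectionVars false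

variable {α : Type*} [DecidableEq α] [Fintype α]

lemma total_eq {k : ℕ} (p : Fin k → α) :
    ∑ a : α, (∑ i : Fin k, Finsupp.single (p i) (1 : ℕ)) a = k := by
  simp only [Finsupp.finset_sum_apply]
  rw [Finset.sum_comm]
  simp [Finsupp.single_apply]

lemma apply_ne_zero_iff {k : ℕ} (p : Fin k → α) (a : α) :
    (∑ i : Fin k, Finsupp.single (p i) (1 : ℕ)) a ≠ 0 ↔ ∃ i, p i = a := by
  rw [Finsupp.finset_sum_apply]
  simp [Finsupp.single_apply, Finset.sum_eq_zero_iff, Finset.filter_eq_empty_iff]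

variable {ℓ ℓ' : ℕ}

lemma key {k : ℕ} {r r' : Fin k → Fin ℓ} {c c' : Fin k → Fin ℓ'}
    (hr : StrictMono r) (hc : StrictMono c) (hr' : StrictMono r') (hc' : StrictMono c')
    (σ : Equiv.Perm (Fin k))
    (h : ∑ i : Fin k, Finsupp.single (r' (σ i), c' i) (1 : ℕ)
        = ∑ i : Fin k, Finsupp.single (r i, c i) 1) :
    r' = r ∧ c' = c ∧ σ = 1 := by
  haveI hwf : WellFoundedLT (Fin k) := inferInstance
  have hrange : ∀ a : Fin ℓ × Fin ℓ',
      (∃ i, (r' (σ i), c' i) = a) ↔ ∃ i, (r i, c i) = a := by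
    intro a
    rw [← apply_ne_zero_iff, ← apply_ne_zero_iff, h]
  have hrr : r' = r := by
    refine (@StrictMono.range_inj _ _ _ _ hwf r' r hr' hr).1 ?_
    ext x
    simp only [Set.mem_range]
    constructor
    · rintro ⟨i, rfl⟩
      obtain ⟨j, hj⟩ := (hrange (r' (σ (σ.symm i)), c' (σ.symm i))).1 ⟨σ.symm i, rfl⟩
      exact ⟨j, by simpa using congrArg Prod.fst hj⟩
    · rintro ⟨i, rfl⟩
      obtain ⟨j, hj⟩ := (hrange (r i, c i)).2 ⟨i, rfl⟩
      exact ⟨σ j, by simpa using congrArg Prod.fst hj⟩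
  have hcc : c' = c := by
    refine (@StrictMono.range_inj _ _ _ _ hwf c' c hc' hc).1 ?_
    ext x
    simp only [Set.mem_range]
    constructor
    · rintro ⟨i, rfl⟩
      obtain ⟨j, hj⟩ := (hrange (r' (σ i), c' i)).1 ⟨i, rfl⟩
      exact ⟨j, by simpa using congrArg Prod.snd hj⟩
    · rintro ⟨i, rfl⟩
      obtain ⟨j, hj⟩ := (hrange (r i, c i)).2 ⟨i, rfl⟩
      exact ⟨j, by simpa using congrArg Prod.snd hj⟩
  rw [hrr, hcc] at hrange
  refine ⟨hrr, hcc, Equiv.ext fun i => ?_⟩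
  obtain ⟨j, hj⟩ := (hrange (r (σ i), c i)).1 ⟨i, rfl⟩
  have hji : j = i := hc.injective (by simpa using congrArg Prod.snd hj)
  subst hji
  have : r j = r (σ j) := by simpa using congrArg Prod.fst hj
  simpa using (hr.injective this).symm

/-- expansion of the generic minor -/
lemma genMinor_eq {F : Type*} [Field F] (k : ℕ) (r : Fin k → Fin ℓ) (c : Fin k → Fin ℓ') :
    genMinor (F := F) ℓ ℓ' k r c =
      ∑ σ : Equiv.Perm (Fin k), Equiv.Perm.sign σ •
        (monomial (∑ i : Fin k, Finsupp.single (r (σ i), c i) 1) (1 : F)) := by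
  rw [genMinor, Matrix.det_apply]
  refine Finset.sum_congr rfl fun σ _ => ?_
  congr 1
  rw [monomial_sum_one]
  refine Finset.prod_congr rfl fun i _ => ?_
  simp [Matrix.of_apply, X]

lemma coeff_genMinor_self {F : Type*} [Field F] (k : ℕ) (r : Fin k → Fin ℓ)
    (c : Fin k → Fin ℓ') (hr : StrictMono r) (hc : StrictMono c) :
    coeff (∑ i : Fin k, Finsupp.single (r i, c i) 1) (genMinor (F := F) ℓ ℓ' k r c) = 1 := by
  rw [genMinor_eq, coeff_sum]
  rw [Finset.sum_eq_single_of_mem (1 : Equiv.Perm (Fin k)) (Finset.mem_univ _)]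
  · simp [coeff_smul, coeff_monomial]
  · intro σ _ hσ
    rw [coeff_smul, coeff_monomial, if_neg, smul_zero]
    intro heq
    exact hσ (key hr hc hr hc σ heq).2.2

lemma coeff_genMinor_ne_zero {F : Type*} [Field F] {k k' : ℕ} {r : Fin k → Fin ℓ}
    {c : Fin k → Fin ℓ'} {r' : Fin k' → Fin ℓ} {c' : Fin k' → Fin ℓ'}
    (hr : StrictMono r) (hc : StrictMono c) (hr' : StrictMono r') (hc' : StrictMono c')
    (h : coeff (∑ i : Fin k, Finsupp.single (r i, c i) 1)
      (genMinor (F := F) ℓ ℓ' k' r' c') ≠ 0) :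
    genMinor (F := F) ℓ ℓ' k' r' c' = genMinor (F := F) ℓ ℓ' k r c := by
  rw [genMinor_eq, coeff_sum] at h
  obtain ⟨σ, -, hσ⟩ := Finset.exists_ne_zero_of_sum_ne_zero h
  rw [coeff_smul, coeff_monomial] at hσ
  have heq : ∑ i : Fin k', Finsupp.single (r' (σ i), c' i) (1 : ℕ)
      = ∑ i : Fin k, Finsupp.single (r i, c i) 1 := by
    by_contra hne
    rw [if_neg hne, smul_zero] at hσ
    exact hσ rfl
  have hk : k' = k := by
    have h1 := total_eq (fun i : Fin k' => ((r' (σ i), c' i) : Fin ℓ × Fin ℓ'))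
    have h2 := total_eq (fun i : Fin k => ((r i, c i) : Fin ℓ × Fin ℓ'))
    rw [← h1, ← h2, heq]
  subst hk
  obtain ⟨h1, h2, -⟩ := key hr hc hr' hc' σ heq
  rw [h1, h2]

end MinorAux

/-- The set of all minors of the generic `ℓ × ℓ'` matrix is linearly independent
over the field `F`. -/
theorem minorSet_linearIndependent (F : Type*) [Field F] (ℓ ℓ' : ℕ)
    (hℓ : 1 ≤ ℓ) (hℓℓ' : ℓ ≤ ℓ') :
    LinearIndependent F (fun p : minorSet F ℓ ℓ' => (p : MvPolynomial (Fin ℓ × Fin ℓ') F)) := by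
  rw [linearIndependent_iff']
  intro s g hsum i hi
  obtain ⟨k, r, c, hr, hc, hp⟩ := i.2
  have hco := congrArg (MvPolynomial.coeff (∑ j : Fin k, Finsupp.single (r j, c j) 1)) hsum
  rw [MvPolynomial.coeff_sum, MvPolynomial.coeff_zero] at hco
  rw [Finset.sum_eq_single_of_mem i hi] at hco
  · rw [MvPolynomial.coeff_smul, hp, MinorAux.coeff_genMinor_self k r c hr hc,
      smul_eq_mul, mul_one] at hco
    exact hco
  · intro j hjs hji
    rw [MvPolynomial.coeff_smul]
    obtain ⟨k', r', c', hr', hc', hp'⟩ := j.2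
    suffices hz : MvPolynomial.coeff (∑ j : Fin k, Finsupp.single (r j, c j) 1)
        ((j : MvPolynomial (Fin ℓ × Fin ℓ') F)) = 0 by
      rw [hz, smul_zero]
    by_contra hne
    have hje : (j : MvPolynomial (Fin ℓ × Fin ℓ') F) = genMinor ℓ ℓ' k r c := by
      rw [hp']
      exact MinorAux.coeff_genMinor_ne_zero hr hc hr' hc' (hp' ▸ hne)
    exact hji (Subtype.ext (hje.trans hp.symm))
end

section
/- The F-linear span of all minors of an ℓ×ℓ' generic matrix X (including the constant 1 as the 0×0 minor) has dimension binomial(ℓ+ℓ', ℓ) over F. -/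
open MvPolynomial

open MvPolynomial

section Aux

open Finset

/-- Index type: pairs of finsets of rows and columns of the same cardinality. -/
abbrev MIdx (ℓ ℓ' : ℕ) := {st : Finset (Fin ℓ) × Finset (Fin ℓ') // st.1.card = st.2.card}

variable {F : Type*} [Field F] {ℓ ℓ' : ℕ}

/-- The minor corresponding to an index. -/
noncomputable def mF (F : Type*) [Field F] (ℓ ℓ' : ℕ) (i : MIdx ℓ ℓ') :
    MvPolynomial (Fin ℓ × Fin ℓ') F :=
  genMinor ℓ ℓ' i.1.1.card (i.1.1.orderEmbOfFin rfl) (i.1.2.orderEmbOfFin i.2.symm)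

/-- The diagonal monomial exponent of an index. -/
noncomputable def mMon (ℓ ℓ' : ℕ) (i : MIdx ℓ ℓ') : (Fin ℓ × Fin ℓ') →₀ ℕ :=
  ∑ x, Finsupp.single (i.1.1.orderEmbOfFin rfl x, i.1.2.orderEmbOfFin i.2.symm x) 1

lemma prod_X_single {σ' ι : Type*} (s : Finset ι) (p : ι → σ') :
    (∏ j ∈ s, (X (p j) : MvPolynomial σ' F)) =
      monomial (∑ j ∈ s, Finsupp.single (p j) 1) 1 := by
  classical
  induction s using Finset.cons_induction with
  | empty => simp
  | cons a s ha ih =>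
      rw [Finset.prod_cons, Finset.sum_cons, ih, X, monomial_mul, one_mul]

lemma sum_single_apply_mem {β : Type*} {k : ℕ} {p : Fin k → β}
    (hp : Function.Injective p) {q : β} (hq : q ∈ Set.range p) :
    (∑ j, Finsupp.single (p j) (1 : ℕ)) q = 1 := by
  classical
  obtain ⟨x0, rfl⟩ := hq
  rw [Finsupp.finset_sum_apply, Finset.sum_eq_single x0]
  · simp [Finsupp.single_apply]
  · intro b _ hb
    rw [Finsupp.single_apply, if_neg fun hh => hb (hp hh)]
  · simp

lemma sum_single_apply_not_mem {β : Type*} {k : ℕ} {p : Fin k → β}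
    {q : β} (hq : q ∉ Set.range p) :
    (∑ j, Finsupp.single (p j) (1 : ℕ)) q = 0 := by
  classical
  rw [Finsupp.finset_sum_apply]
  exact Finset.sum_eq_zero fun x _ => by
    rw [Finsupp.single_apply, if_neg fun hh => hq ⟨x, hh⟩]

lemma range_eq_of_sum_single_eq {β : Type*} {k k' : ℕ} {p : Fin k → β} {p' : Fin k' → β}
    (hp : Function.Injective p) (hp' : Function.Injective p')
    (h : (∑ j, Finsupp.single (p j) (1 : ℕ)) = ∑ j, Finsupp.single (p' j) 1) :
    Set.range p = Set.range p' := by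
  ext q
  have hq := DFunLike.congr_fun h q
  constructor <;> intro hmem
  · by_contra h'
    exact one_ne_zero ((sum_single_apply_mem hp hmem).symm.trans
      (hq.trans (sum_single_apply_not_mem h')))
  · by_contra h'
    exact one_ne_zero ((sum_single_apply_mem hp' hmem).symm.trans
      (hq.symm.trans (sum_single_apply_not_mem h')))

lemma diag_eq_cases {k k' : ℕ} {r : Fin k → Fin ℓ} {c : Fin k → Fin ℓ'}
    {r' : Fin k' → Fin ℓ} {c' : Fin k' → Fin ℓ'}
    (hc : Function.Injective c)
    (hc' : Function.Injective c') (σ : Equiv.Perm (Fin k))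
    (h : (∑ x, Finsupp.single (r (σ x), c x) (1 : ℕ)) = ∑ x, Finsupp.single (r' x, c' x) 1) :
    Set.range r = Set.range r' ∧ Set.range c = Set.range c' ∧
      ∀ x, ∃ y, r (σ x) = r' y ∧ c x = c' y := by
  have hpi : Function.Injective (fun x => (r (σ x), c x) : Fin k → Fin ℓ × Fin ℓ') :=
    fun a b hab => hc (congrArg Prod.snd hab)
  have hp'i : Function.Injective (fun x => (r' x, c' x) : Fin k' → Fin ℓ × Fin ℓ') :=
    fun a b hab => hc' (congrArg Prod.snd hab)
  have hrange : Set.range (fun x => (r (σ x), c x) : Fin k → Fin ℓ × Fin ℓ')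
      = Set.range (fun x => (r' x, c' x) : Fin k' → Fin ℓ × Fin ℓ') :=
    range_eq_of_sum_single_eq hpi hp'i h
  refine ⟨?_, ?_, ?_⟩
  · have h1 : Prod.fst '' Set.range (fun x => (r (σ x), c x) : Fin k → Fin ℓ × Fin ℓ')
        = Set.range r := by
      rw [← Set.range_comp]
      exact σ.surjective.range_comp r
    have h2 : Prod.fst '' Set.range (fun x => (r' x, c' x) : Fin k' → Fin ℓ × Fin ℓ')
        = Set.range r' := by
      rw [← Set.range_comp]; rfl
    rw [← h1, ← h2, hrange]
  · have h1 : Prod.snd '' Set.range (fun x => (r (σ x), c x) : Fin k → Fin ℓ × Fin ℓ')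
        = Set.range c := by
      rw [← Set.range_comp]; rfl
    have h2 : Prod.snd '' Set.range (fun x => (r' x, c' x) : Fin k' → Fin ℓ × Fin ℓ')
        = Set.range c' := by
      rw [← Set.range_comp]; rfl
    rw [← h1, ← h2, hrange]
  · intro x
    have hx : ((r (σ x), c x) : Fin ℓ × Fin ℓ') ∈
        Set.range (fun x => (r' x, c' x) : Fin k' → Fin ℓ × Fin ℓ') := by
      rw [← hrange]; exact ⟨x, rfl⟩
    obtain ⟨y, hy⟩ := hx
    exact ⟨y, (congrArg Prod.fst hy).symm, (congrArg Prod.snd hy).symm⟩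

lemma diag_cond_iff {k : ℕ} {r : Fin k → Fin ℓ} {c : Fin k → Fin ℓ'}
    (hrI : Function.Injective r) (hcI : Function.Injective c) (σ : Equiv.Perm (Fin k)) :
    ((∑ x, Finsupp.single (r (σ x), c x) (1 : ℕ)) = ∑ x, Finsupp.single (r x, c x) 1)
      ↔ σ = 1 := by
  constructor
  · intro h
    obtain ⟨-, -, hmem⟩ := diag_eq_cases hcI hcI σ h
    refine Equiv.ext fun x => ?_
    obtain ⟨y, hy1, hy2⟩ := hmem x
    have hxy : y = x := hcI hy2.symm
    rw [Equiv.Perm.one_apply]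
    exact hrI (hy1.trans (congrArg r hxy))
  · rintro rfl
    rfl

lemma genMinor_eq_sum (k : ℕ) (r : Fin k → Fin ℓ) (c : Fin k → Fin ℓ') :
    (genMinor ℓ ℓ' k r c : MvPolynomial (Fin ℓ × Fin ℓ') F) =
      ∑ σ : Equiv.Perm (Fin k), Equiv.Perm.sign σ •
        (monomial (∑ x, Finsupp.single (r (σ x), c x) 1) (1 : F)) := by
  rw [genMinor, Matrix.det_apply]
  refine Finset.sum_congr rfl fun σ _ => ?_
  congr 1
  simp only [Matrix.of_apply]
  exact prod_X_single Finset.univ (fun x => (r (σ x), c x))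

lemma genMinor_cast {k k' : ℕ} (h : k = k') (r : Fin k' → Fin ℓ) (c : Fin k' → Fin ℓ') :
    (genMinor ℓ ℓ' k' r c : MvPolynomial (Fin ℓ × Fin ℓ') F) =
      genMinor ℓ ℓ' k (r ∘ Fin.cast h) (c ∘ Fin.cast h) := by
  subst h; rfl

lemma coeff_mF_self (i : MIdx ℓ ℓ') : coeff (mMon ℓ ℓ' i) (mF F ℓ ℓ' i) = 1 := by
  classical
  obtain ⟨⟨s, t⟩, hst⟩ := i
  rw [mF, genMinor_eq_sum, coeff_sum]
  simp only [coeff_smul, coeff_monomial, mMon]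
  have key := fun σ => diag_cond_iff (r := ⇑(s.orderEmbOfFin rfl))
    (c := ⇑(t.orderEmbOfFin hst.symm)) (s.orderEmbOfFin rfl).injective
    (t.orderEmbOfFin hst.symm).injective σ
  simp only [key]
  simp [smul_ite, Finset.sum_ite_eq']

lemma coeff_mF_ne {i j : MIdx ℓ ℓ'} (hij : i ≠ j) :
    coeff (mMon ℓ ℓ' j) (mF F ℓ ℓ' i) = 0 := by
  classical
  obtain ⟨⟨s, t⟩, hst⟩ := i
  obtain ⟨⟨s', t'⟩, hst'⟩ := j
  rw [mF, genMinor_eq_sum, coeff_sum]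
  simp only [coeff_smul, coeff_monomial, mMon]
  refine Finset.sum_eq_zero fun σ _ => ?_
  rw [if_neg, smul_zero]
  intro hσ
  obtain ⟨hrr, hcc, -⟩ := diag_eq_cases (t.orderEmbOfFin hst.symm).injective
    (t'.orderEmbOfFin hst'.symm).injective σ hσ
  apply hij
  have hs : s = s' := by
    apply Finset.coe_injective
    rw [← Finset.range_orderEmbOfFin s rfl, ← Finset.range_orderEmbOfFin s' rfl]
    exact hrr
  have ht : t = t' := by
    apply Finset.coe_injective
    rw [← Finset.range_orderEmbOfFin t hst.symm, ← Finset.range_orderEmbOfFin t' hst'.symm]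
    exact hcc
  subst hs; subst ht
  rfl

lemma coeff_mF (i j : MIdx ℓ ℓ') :
    coeff (mMon ℓ ℓ' j) (mF F ℓ ℓ' i) = if i = j then 1 else 0 := by
  classical
  by_cases h : i = j
  · subst h; rw [if_pos rfl, coeff_mF_self]
  · rw [if_neg h, coeff_mF_ne h]

lemma li_mF : LinearIndependent F (mF F ℓ ℓ') := by
  classical
  rw [Fintype.linearIndependent_iff]
  intro g hg j
  have h := congrArg (coeff (mMon ℓ ℓ' j)) hg
  rw [coeff_sum] at h
  simp only [coeff_smul, coeff_mF, coeff_zero, smul_eq_mul, mul_ite, mul_one, mul_zero] at h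
  rwa [Finset.sum_ite_eq' Finset.univ j, if_pos (Finset.mem_univ j)] at h

lemma range_mF : Set.range (mF F ℓ ℓ') = minorSet F ℓ ℓ' := by
  classical
  ext q
  constructor
  · rintro ⟨⟨⟨s, t⟩, hst⟩, rfl⟩
    exact ⟨s.card, _, _, (s.orderEmbOfFin rfl).strictMono,
      (t.orderEmbOfFin hst.symm).strictMono, rfl⟩
  · rintro ⟨k, r, c, hr, hc, rfl⟩
    have hs : (Finset.univ.image r).card = k := by
      rw [Finset.card_image_of_injective _ hr.injective, Finset.card_univ, Fintype.card_fin]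
    have ht : (Finset.univ.image c).card = k := by
      rw [Finset.card_image_of_injective _ hc.injective, Finset.card_univ, Fintype.card_fin]
    have hcast : StrictMono (Fin.cast hs) := fun a b hab => hab
    have hmono1 : StrictMono (r ∘ Fin.cast hs) := hr.comp hcast
    have hmono2 : StrictMono (c ∘ Fin.cast hs) := hc.comp hcast
    have h1 : ⇑((Finset.univ.image r).orderEmbOfFin rfl) = r ∘ Fin.cast hs :=
      (Finset.orderEmbOfFin_unique rfl
        (fun x => Finset.mem_image_of_mem r (Finset.mem_univ _)) hmono1).symm
    have h2 : ⇑((Finset.univ.image c).orderEmbOfFin (ht.trans hs.symm)) = c ∘ Fin.cast hs :=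
      (Finset.orderEmbOfFin_unique (ht.trans hs.symm)
        (fun x => Finset.mem_image_of_mem c (Finset.mem_univ _)) hmono2).symm
    refine ⟨⟨(Finset.univ.image r, Finset.univ.image c), hs.trans ht.symm⟩, ?_⟩
    rw [mF]
    dsimp only
    rw [genMinor_cast hs r c, h1, h2]

lemma vandermonde' : ∑ m ∈ Finset.range (ℓ + 1), ℓ.choose m * ℓ'.choose m
    = (ℓ + ℓ').choose ℓ := by
  rw [Nat.add_choose_eq, Finset.Nat.sum_antidiagonal_eq_sum_range_succ_mk,
    ← Finset.sum_range_reflect]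
  refine Finset.sum_congr rfl fun j hj => ?_
  rw [Finset.mem_range, Nat.lt_succ_iff] at hj
  simp [Nat.add_sub_cancel, Nat.choose_symm hj, Nat.sub_sub_self hj]

lemma card_MIdx : Fintype.card (MIdx ℓ ℓ') = (ℓ + ℓ').choose ℓ := by
  classical
  have e : MIdx ℓ ℓ' ≃ Σ s : Finset (Fin ℓ), {t : Finset (Fin ℓ') // t.card = s.card} :=
    { toFun := fun i => ⟨i.1.1, i.1.2, i.2.symm⟩
      invFun := fun x => ⟨(x.1, x.2.1), x.2.2.symm⟩
      left_inv := fun i => rfl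
      right_inv := fun x => rfl }
  rw [Fintype.card_congr e, Fintype.card_sigma]
  simp only [Fintype.card_finset_len, Fintype.card_fin]
  rw [← vandermonde']
  rw [show (Finset.univ : Finset (Finset (Fin ℓ))) = (Finset.univ : Finset (Fin ℓ)).powerset
      from Finset.powerset_univ.symm]
  rw [Finset.sum_powerset_apply_card (fun m => ℓ'.choose m)]
  simp [Finset.card_univ, mul_comm]

end Aux

/-- The `F`-linear span of all minors of the generic `ℓ × ℓ'` matrix (including
the constant `1` as the `0 × 0` minor) has dimension `(ℓ+ℓ').choose ℓ` over `F`. -/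
theorem finrank_span_minorSet (F : Type*) [Field F] (ℓ ℓ' : ℕ)
    (hℓ : 1 ≤ ℓ) (hℓℓ' : ℓ ≤ ℓ') :
    Module.finrank F (Submodule.span F (minorSet F ℓ ℓ')) = (ℓ + ℓ').choose ℓ := by
  rw [← range_mF (F := F), finrank_span_eq_card li_mF, card_MIdx]
end

section
/- Let f be in F(ℓ,2ℓ) such that the unique maximal minor det(X) appears in f with coefficient 1. Then there exists a unique ℓ×ℓ matrix A over F_q such that f = det(X+A) + h, where h is an F_q-linear combination of minors of X of order at most ℓ−2. -/
open MvPolynomial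

/-- The generic square matrix of indeterminates, of size `ℓ × ℓ`. -/
noncomputable def genMatrix (F : Type*) [Field F] (ℓ : ℕ) :
    Matrix (Fin ℓ) (Fin ℓ) (MvPolynomial (Fin ℓ × Fin ℓ) F) :=
  Matrix.of fun i j => X (i, j)

/-!
Expanding `det (X + A)` multilinearly in the rows writes it as a sum over the sets `s` of rows
taken from `X`; Laplace expansion along the remaining (constant) rows makes each term a
combination of minors of order `#s`. The terms with `#s = ℓ` and `#s = ℓ - 1` are `det X` and
`∑ (-1)^(i+j) A i j * M i j`, where `M i j` is the minor of `X` without row `i` and column `j`.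
Since the `M i j` are exactly the minors of order `ℓ - 1`, matching the order-`(ℓ - 1)` part
of `f` determines `A`.

For uniqueness, substitute `X ↦ t • P`: a minor of order `k` becomes a multiple of `t ^ k`, so
the coefficient of `t ^ (ℓ - 1)` kills all minors of order `≤ ℓ - 2`; choosing for `P` the
identity matrix with a zero row `i` and a zero column `j` inserted, it also kills every `M i' j'`
except `M i j`.
-/

open Finset Matrix

section

variable {F : Type*} [Field F]

theorem eq_succAbove_of_strictMono {n : ℕ} {r : Fin n → Fin (n + 1)} (hr : StrictMono r) :
    ∃ i : Fin (n + 1), r = i.succAbove := by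
  obtain ⟨i, hi⟩ : ∃ i, i ∉ Set.range r := by
    by_contra! h
    simpa using Fintype.card_le_of_surjective r fun i => h i
  refine ⟨i, (hr.range_inj (Fin.strictMono_succAbove i)).1 ?_⟩
  rw [Fin.range_succAbove]
  refine Set.eq_of_subset_of_ncard_le (fun x hx h => hi (h ▸ hx)) ?_
  rw [Set.ncard_range_of_injective hr.injective, Set.ncard_compl, Set.ncard_singleton]
  simp

theorem C_neg_one_pow_mul {σ : Type*} (k : ℕ) (x : F) :
    C ((-1) ^ k * x) = ((-1) ^ k * C x : MvPolynomial σ F) := by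
  simp

variable (F) in
noncomputable def minorSpan (ℓ ℓ' m : ℕ) :
    Submodule F (MvPolynomial (Fin ℓ × Fin ℓ') F) :=
  Submodule.span F
    {p | ∃ k < m, ∃ (r : Fin k → Fin ℓ) (c : Fin k → Fin ℓ'), p = genMinor ℓ ℓ' k r c}

theorem genMinor_mem_minorSpan {ℓ ℓ' k m : ℕ} (hk : k < m) (r : Fin k → Fin ℓ)
    (c : Fin k → Fin ℓ') : genMinor ℓ ℓ' k r c ∈ minorSpan F ℓ ℓ' m :=
  Submodule.subset_span ⟨k, hk, r, c, rfl⟩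

theorem genMinor_comp_perm {ℓ ℓ' k : ℕ} (r : Fin k → Fin ℓ) (c : Fin k → Fin ℓ')
    (σ τ : Equiv.Perm (Fin k)) :
    genMinor ℓ ℓ' k (r ∘ σ) (c ∘ τ) =
      (Equiv.Perm.sign σ * Equiv.Perm.sign τ : ℤ) • (genMinor ℓ ℓ' k r c : MvPolynomial _ F) := by
  have : (of fun i j => (X ((r ∘ σ) i, (c ∘ τ) j) : MvPolynomial (Fin ℓ × Fin ℓ') F)) =
      ((of fun i j => X (r i, c j)).submatrix σ id).submatrix id τ := rfl
  rw [genMinor, this, det_permute', det_permute, genMinor, zsmul_eq_mul]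
  push_cast
  ring

theorem genMinor_eq_zero_of_not_injective {ℓ ℓ' k : ℕ} {r : Fin k → Fin ℓ} {c : Fin k → Fin ℓ'}
    (h : ¬ (Function.Injective r ∧ Function.Injective c)) :
    (genMinor ℓ ℓ' k r c : MvPolynomial _ F) = 0 := by
  rw [not_and_or, Function.not_injective_iff, Function.not_injective_iff] at h
  rcases h with ⟨i₁, i₂, h, hne⟩ | ⟨j₁, j₂, h, hne⟩
  · exact det_zero_of_row_eq hne (funext fun j => by simp [h])
  · exact det_zero_of_column_eq hne fun i => by simp [h]

theorem span_strictMono_minors_eq (ℓ ℓ' m : ℕ) :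
    Submodule.span F {p : MvPolynomial (Fin ℓ × Fin ℓ') F |
        ∃ (k : ℕ) (_ : k < m) (r : Fin k → Fin ℓ) (c : Fin k → Fin ℓ'),
          StrictMono r ∧ StrictMono c ∧ p = genMinor ℓ ℓ' k r c} =
      minorSpan F ℓ ℓ' m := by
  refine le_antisymm (Submodule.span_mono ?_) (Submodule.span_le.2 ?_)
  · rintro _ ⟨k, hk, r, c, -, -, rfl⟩
    exact ⟨k, hk, r, c, rfl⟩
  rintro _ ⟨k, hk, r, c, rfl⟩
  by_cases hrc : Function.Injective r ∧ Function.Injective c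
  swap
  · rw [genMinor_eq_zero_of_not_injective hrc]
    exact zero_mem _
  have sorted {n : ℕ} {x : Fin k → Fin n} (hx : Function.Injective x) :
      StrictMono (x ∘ Tuple.sort x) :=
    (Tuple.monotone_sort x).strictMono_of_injective (hx.comp (Tuple.sort x).injective)
  have hsort := genMinor_comp_perm (F := F) (r ∘ Tuple.sort r) (c ∘ Tuple.sort c)
    (Tuple.sort r)⁻¹ (Tuple.sort c)⁻¹
  simp only [Function.comp_assoc, ← Equiv.Perm.coe_mul, mul_inv_cancel, Equiv.Perm.coe_one,
    Function.comp_id] at hsort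
  rw [hsort]
  exact Submodule.smul_of_tower_mem _ _
    (Submodule.subset_span ⟨k, hk, _, _, sorted hrc.1, sorted hrc.2, rfl⟩)

theorem det_ite_mem_minorSpan {ℓ ℓ' m : ℕ} {n : ℕ} (s : Finset (Fin n)) (hs : #s < m)
    (a : Fin n → Fin ℓ) (b : Fin n → Fin ℓ') (v : Matrix (Fin n) (Fin n) F) :
    (of fun p q => if p ∈ s then X (a p, b q) else C (v p q)).det ∈ minorSpan F ℓ ℓ' m := by
  induction n generalizing m with
  | zero =>
    simpa [genMinor] using genMinor_mem_minorSpan (F := F) (Nat.zero_lt_of_lt hs) a b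
  | succ n ih =>
    by_cases hall : ∀ p, p ∈ s
    · have : s = univ := eq_univ_of_forall hall
      subst this
      simp only [mem_univ, if_true]
      exact genMinor_mem_minorSpan (by simpa using hs) a b
    obtain ⟨p₀, hp₀⟩ := not_forall.1 hall
    rw [det_succ_row _ p₀]
    refine sum_mem fun q _ => ?_
    set s' := univ.filter fun p => p₀.succAbove p ∈ s
    have hs' : #s' < m := lt_of_le_of_lt (card_le_card_of_injOn p₀.succAbove
      (fun p hp => (mem_filter.1 hp).2) (Fin.succAbove_right_injective.injOn)) hs
    have hminor := ih s' hs' (a ∘ p₀.succAbove) (b ∘ q.succAbove)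
      (v.submatrix p₀.succAbove q.succAbove)
    have hsub : (of fun p q => if p ∈ s then X (a p, b q) else C (v p q)).submatrix
        p₀.succAbove q.succAbove = of fun p q' => if p ∈ s' then X ((a ∘ p₀.succAbove) p,
          (b ∘ q.succAbove) q') else C (v.submatrix p₀.succAbove q.succAbove p q') := by
      ext; simp [s']
    rw [hsub, of_apply, if_neg hp₀, ← C_neg_one_pow_mul, ← smul_eq_C_mul]
    exact Submodule.smul_mem _ _ hminor

theorem det_genMatrix_add_eq_sum (ℓ : ℕ) (A : Matrix (Fin ℓ) (Fin ℓ) F) :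
    (genMatrix F ℓ + A.map C).det =
      ∑ s : Finset (Fin ℓ), (of fun p q => if p ∈ s then X (p, q) else C (A p q)).det := by
  refine (detRowAlternating.map_add_univ _ _).trans (sum_congr rfl fun s _ => congrArg det ?_)
  funext p q
  by_cases hp : p ∈ s <;> simp [hp, genMatrix, Finset.piecewise]

variable (F) in
noncomputable def cofactorSum (n : ℕ) :
    Matrix (Fin (n + 1)) (Fin (n + 1)) F →ₗ[F] MvPolynomial (Fin (n + 1) × Fin (n + 1)) F where
  toFun A := ∑ i : Fin (n + 1), ∑ j : Fin (n + 1),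
    ((-1) ^ (i + j : ℕ) * A i j) • genMinor _ _ n i.succAbove j.succAbove
  map_add' A B := by simp [mul_add, add_smul, sum_add_distrib]
  map_smul' x A := by simp [smul_sum, smul_smul, mul_left_comm]

theorem det_ite_compl_singleton {n : ℕ} (A : Matrix (Fin (n + 1)) (Fin (n + 1)) F)
    (i : Fin (n + 1)) :
    (of fun p q => if p ∈ ({i}ᶜ : Finset _) then X (p, q) else C (A p q)).det =
      ∑ j : Fin (n + 1), ((-1) ^ (i + j : ℕ) * A i j) • genMinor _ _ n i.succAbove j.succAbove := by
  rw [det_succ_row _ i]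
  refine sum_congr rfl fun j _ => ?_
  have hsub : (of fun p q => if p ∈ ({i}ᶜ : Finset _) then X (p, q) else C (A p q)).submatrix
      i.succAbove j.succAbove = of fun t u => X (i.succAbove t, j.succAbove u) := by
    ext t u
    simp [Fin.succAbove_ne]
  rw [hsub, of_apply, if_neg (by simp), ← C_neg_one_pow_mul, ← smul_eq_C_mul]
  rfl

theorem det_genMatrix_add_sub_cofactorSum_mem {n : ℕ} (A : Matrix (Fin (n + 1)) (Fin (n + 1)) F) :
    (genMatrix F (n + 1) + A.map C).det - (genMatrix F (n + 1)).det - cofactorSum F n A ∈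
      minorSpan F (n + 1) (n + 1) n := by
  set D : Finset (Fin (n + 1)) → MvPolynomial (Fin (n + 1) × Fin (n + 1)) F :=
    fun s => (of fun p q => if p ∈ s then X (p, q) else C (A p q)).det
  have hsplit : ∑ s, D s = D univ + ∑ i, D {i}ᶜ +
      ∑ k ∈ range n, ∑ t ∈ powersetCard (k + 2) univ, D tᶜ := by
    rw [Fintype.sum_bijective _ compl_involutive.bijective D (fun t => D tᶜ)
      fun s => by rw [compl_compl], ← powerset_univ, sum_powerset, card_univ,
      Fintype.card_fin, sum_range_succ', sum_range_succ', powersetCard_zero, powersetCard_one]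
    simp only [sum_singleton, compl_empty, sum_map, Function.Embedding.coeFn_mk]
    abel
  have hmain : (genMatrix F (n + 1)).det = D univ := by
    simp [D, genMatrix]
  have hlin : cofactorSum F n A = ∑ i, D {i}ᶜ := by
    simp only [D, det_ite_compl_singleton]
    rfl
  rw [det_genMatrix_add_eq_sum, hsplit, hmain, hlin, add_assoc, add_sub_cancel_left,
    add_sub_cancel_left]
  refine sum_mem fun k hk => sum_mem fun t ht => det_ite_mem_minorSpan _ ?_ _ _ _
  rw [card_compl, (mem_powersetCard.1 ht).2, Fintype.card_fin]
  have := mem_range.1 hk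
  omega

theorem minorSpan_le_range_cofactorSum_sup (n : ℕ) :
    minorSpan F (n + 1) (n + 1) (n + 1) ≤ LinearMap.range (cofactorSum F n) ⊔
      minorSpan F (n + 1) (n + 1) n := by
  rw [← span_strictMono_minors_eq, Submodule.span_le]
  rintro _ ⟨k, hk, r, c, hr, hc, rfl⟩
  rcases Nat.lt_succ_iff_lt_or_eq.1 hk with hk | rfl
  · exact Submodule.mem_sup_right (genMinor_mem_minorSpan hk r c)
  obtain ⟨i, rfl⟩ := eq_succAbove_of_strictMono hr
  obtain ⟨j, rfl⟩ := eq_succAbove_of_strictMono hc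
  refine Submodule.mem_sup_left ⟨single i j ((-1) ^ (i + j : ℕ)), ?_⟩
  simp [cofactorSum, single_apply, ite_and, ← pow_add]

noncomputable def scaledEval {ℓ ℓ' : ℕ} (P : Matrix (Fin ℓ) (Fin ℓ') F) :
    MvPolynomial (Fin ℓ × Fin ℓ') F →ₐ[F] Polynomial F :=
  aeval fun v => Polynomial.C (P v.1 v.2) * Polynomial.X

theorem scaledEval_genMinor {ℓ ℓ' k : ℕ} (P : Matrix (Fin ℓ) (Fin ℓ') F) (r : Fin k → Fin ℓ)
    (c : Fin k → Fin ℓ') :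
    scaledEval P (genMinor ℓ ℓ' k r c) = Polynomial.C (P.submatrix r c).det * Polynomial.X ^ k := by
  have : (scaledEval P).mapMatrix (of fun i j => (X (r i, c j) : MvPolynomial _ F)) =
      (Polynomial.X : Polynomial F) • (P.submatrix r c).map Polynomial.C := by
    ext1 i j
    simp [scaledEval, Polynomial.X_mul_C]
  rw [genMinor, AlgHom.map_det, this, det_smul, Fintype.card_fin, ← RingHom.mapMatrix_apply,
    ← RingHom.map_det, mul_comm]

theorem coeff_scaledEval_eq_zero {ℓ ℓ' m : ℕ} (P : Matrix (Fin ℓ) (Fin ℓ') F)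
    {f : MvPolynomial (Fin ℓ × Fin ℓ') F} (hf : f ∈ minorSpan F ℓ ℓ' m) :
    (scaledEval P f).coeff m = 0 := by
  refine Submodule.span_induction ?_ (by simp) (fun _ _ _ _ hf hg => by simp [hf, hg])
    (fun x _ _ hf => by simp [hf]) hf
  rintro _ ⟨k, hk, r, c, rfl⟩
  rw [scaledEval_genMinor, Polynomial.coeff_C_mul_X_pow, if_neg hk.ne']

theorem coeff_scaledEval_cofactorSum {n : ℕ} (P A : Matrix (Fin (n + 1)) (Fin (n + 1)) F) :
    (scaledEval P (cofactorSum F n A)).coeff n =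
      ∑ i : Fin (n + 1), ∑ j : Fin (n + 1),
        (-1) ^ (i + j : ℕ) * A i j * (P.submatrix i.succAbove j.succAbove).det := by
  simp [cofactorSum, scaledEval_genMinor]

namespace Matrix

def insertZeroRowCol {m n : ℕ} (i : Fin (m + 1)) (j : Fin (n + 1)) (N : Matrix (Fin m) (Fin n) F) :
    Matrix (Fin (m + 1)) (Fin (n + 1)) F :=
  of <| Fin.insertNth (α := fun _ => Fin (n + 1) → F) i 0 fun t => Fin.insertNth j 0 (N t)

theorem insertZeroRowCol_apply_left {m n : ℕ} (i : Fin (m + 1)) (j : Fin (n + 1))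
    (N : Matrix (Fin m) (Fin n) F) (q : Fin (n + 1)) : insertZeroRowCol i j N i q = 0 := by
  simp [insertZeroRowCol]

theorem insertZeroRowCol_apply_right {m n : ℕ} (i : Fin (m + 1)) (j : Fin (n + 1))
    (N : Matrix (Fin m) (Fin n) F) (p : Fin (m + 1)) : insertZeroRowCol i j N p j = 0 := by
  rcases Fin.eq_self_or_eq_succAbove i p with rfl | ⟨t, rfl⟩ <;> simp [insertZeroRowCol]

theorem submatrix_insertZeroRowCol {m n : ℕ} (i : Fin (m + 1)) (j : Fin (n + 1))
    (N : Matrix (Fin m) (Fin n) F) :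
    (insertZeroRowCol i j N).submatrix i.succAbove j.succAbove = N := by
  ext t u
  simp [insertZeroRowCol]

theorem det_submatrix_insertZeroRowCol {n : ℕ} (i j i' j' : Fin (n + 1))
    (N : Matrix (Fin n) (Fin n) F) :
    ((insertZeroRowCol i j N).submatrix i'.succAbove j'.succAbove).det =
      if i' = i ∧ j' = j then N.det else 0 := by
  by_cases hi : i' = i
  · by_cases hj : j' = j
    · subst hi hj
      rw [submatrix_insertZeroRowCol, if_pos ⟨rfl, rfl⟩]
    obtain ⟨u, rfl⟩ := Fin.exists_succAbove_eq (Ne.symm hj)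
    rw [if_neg (by tauto)]
    exact det_eq_zero_of_column_eq_zero u fun t => insertZeroRowCol_apply_right _ _ _ _
  obtain ⟨t, rfl⟩ := Fin.exists_succAbove_eq (Ne.symm hi)
  rw [if_neg (by tauto)]
  exact det_eq_zero_of_row_eq_zero t fun u => insertZeroRowCol_apply_left _ _ _ _

end Matrix

theorem eq_zero_of_cofactorSum_mem {n : ℕ} {A : Matrix (Fin (n + 1)) (Fin (n + 1)) F}
    (h : cofactorSum F n A ∈ minorSpan F (n + 1) (n + 1) n) : A = 0 := by
  ext i j
  have := coeff_scaledEval_eq_zero (insertZeroRowCol i j 1) h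
  simpa [coeff_scaledEval_cofactorSum, det_submatrix_insertZeroRowCol, ite_and] using this

end

theorem exists_unique_translate_general (F : Type*) [Field F] (ℓ : ℕ) (hℓ : 1 ≤ ℓ)
    (f : MvPolynomial (Fin ℓ × Fin ℓ) F)
    (hf : ∃ g ∈ Submodule.span F
        {p : MvPolynomial (Fin ℓ × Fin ℓ) F |
          ∃ (k : ℕ) (_ : k < ℓ) (r c : Fin k → Fin ℓ),
            StrictMono r ∧ StrictMono c ∧ p = genMinor ℓ ℓ k r c},
      f = (genMatrix F ℓ).det + g) :
    ∃! A : Matrix (Fin ℓ) (Fin ℓ) F,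
      ∃ h ∈ Submodule.span F
        {p : MvPolynomial (Fin ℓ × Fin ℓ) F |
          ∃ (k : ℕ) (_ : k + 2 ≤ ℓ) (r c : Fin k → Fin ℓ),
            StrictMono r ∧ StrictMono c ∧ p = genMinor ℓ ℓ k r c},
        f = (genMatrix F ℓ + A.map C).det + h := by
  obtain ⟨n, rfl⟩ : ∃ n, ℓ = n + 1 := ⟨ℓ - 1, by omega⟩
  obtain ⟨g, hg, rfl⟩ := hf
  simp_rw [show ∀ k, k + 2 ≤ n + 1 ↔ k < n from fun k => by omega]
  rw [span_strictMono_minors_eq] at hg ⊢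
  have hrem (A : Matrix (Fin (n + 1)) (Fin (n + 1)) F) : ∃ r ∈ minorSpan F (n + 1) (n + 1) n,
      (genMatrix F (n + 1) + A.map C).det = (genMatrix F (n + 1)).det + cofactorSum F n A + r :=
    ⟨_, det_genMatrix_add_sub_cofactorSum_mem A, by ring⟩
  obtain ⟨_, ⟨A, rfl⟩, w, hw, hgw⟩ := Submodule.mem_sup.1 (minorSpan_le_range_cofactorSum_sup n hg)
  obtain ⟨rA, hrA, hA⟩ := hrem A
  refine ⟨A, ⟨w - rA, sub_mem hw hrA, by rw [hA, ← hgw]; ring⟩, ?_⟩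
  rintro B ⟨h, hh, hB⟩
  obtain ⟨rB, hrB, hB'⟩ := hrem B
  have hdiff : cofactorSum F n (B - A) = w - h - rB := by
    rw [map_sub]
    linear_combination -hB - hgw - hB'
  rw [← sub_eq_zero]
  exact eq_zero_of_cofactorSum_mem (hdiff ▸ sub_mem (sub_mem hw hh) hrB)

/-- If `f ∈ F(ℓ,2ℓ)` contains the maximal minor `det(X)` with coefficient `1`
(i.e. `f = det(X) + g` with `g` a combination of minors of order `< ℓ`), then there
is a unique `ℓ × ℓ` matrix `A` over `F_q` with `f = det(X+A) + h`, where `h` is an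
`F_q`-linear combination of minors of `X` of order at most `ℓ - 2`. -/
theorem exists_unique_translate (F : Type*) [Field F] [Fintype F] (ℓ : ℕ) (hℓ : 1 ≤ ℓ)
    (f : MvPolynomial (Fin ℓ × Fin ℓ) F)
    (hf : ∃ g ∈ Submodule.span F
        {p : MvPolynomial (Fin ℓ × Fin ℓ) F |
          ∃ (k : ℕ) (_ : k < ℓ) (r c : Fin k → Fin ℓ),
            StrictMono r ∧ StrictMono c ∧ p = genMinor ℓ ℓ k r c},
      f = (genMatrix F ℓ).det + g) :
    ∃! A : Matrix (Fin ℓ) (Fin ℓ) F,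
      ∃ h ∈ Submodule.span F
        {p : MvPolynomial (Fin ℓ × Fin ℓ) F |
          ∃ (k : ℕ) (_ : k + 2 ≤ ℓ) (r c : Fin k → Fin ℓ),
            StrictMono r ∧ StrictMono c ∧ p = genMinor ℓ ℓ k r c},
        f = (genMatrix F ℓ + A.map C).det + h :=
  exists_unique_translate_general F ℓ hℓ f hf
end

section
/- For every invertible ℓ'×ℓ' matrix A over F_q and every ℓ×ℓ' matrix u over F_q, the substitution X ↦ XA^{-1} + u maps the space F(ℓ,m) (the span of minors of the generic ℓ×ℓ' matrix X) into itself. -/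
open MvPolynomial

open MvPolynomial Matrix

/-- The substitution `X ↦ X A⁻¹ + u` on polynomials in the entries of the generic
`ℓ × ℓ'` matrix, for `A ∈ GL_{ℓ'}(F)` and `u` an `ℓ × ℓ'` matrix over `F`. -/
noncomputable def affSubst (F : Type*) [Field F] (ℓ ℓ' : ℕ)
    (A : GL (Fin ℓ') F) (u : Matrix (Fin ℓ) (Fin ℓ') F) :
    MvPolynomial (Fin ℓ × Fin ℓ') F →ₐ[F] MvPolynomial (Fin ℓ × Fin ℓ') F :=
  aeval (fun x : Fin ℓ × Fin ℓ' =>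
    (∑ j, X (x.1, j) * C ((↑(A⁻¹) : Matrix (Fin ℓ') (Fin ℓ') F) j x.2)) + C (u x.1 x.2))

namespace AffSubstAux

variable {F : Type*} [Field F] {ℓ ℓ' : ℕ}

/-- Any injective tuple factors as a strictly monotone tuple composed with a permutation. -/
lemma exists_sorted {n : ℕ} {k : ℕ} (r : Fin k → Fin n) (hr : Function.Injective r) :
    ∃ (r' : Fin k → Fin n) (σ : Equiv.Perm (Fin k)), StrictMono r' ∧ r = r' ∘ σ := by
  have hcard : (Finset.univ.image r).card = k := by
    rw [Finset.card_image_of_injective _ hr, Finset.card_univ, Fintype.card_fin]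
  let e := (Finset.univ.image r).orderIsoOfFin hcard
  refine ⟨fun i => (e i : Fin n), ?_, ?_, ?_⟩
  · exact Equiv.ofBijective (fun i => e.symm ⟨r i, by simp⟩)
      ((Fintype.bijective_iff_injective_and_card _).mpr
        ⟨fun a b hab => hr (congrArg Subtype.val (e.symm.injective hab)), rfl⟩)
  · intro a b hab
    exact Subtype.coe_lt_coe.mpr (e.strictMono hab)
  · funext i
    simp [Equiv.ofBijective]

/-- An arbitrary (not necessarily sorted) minor of the generic matrix lies in the span of
the sorted minors. -/
lemma det_X_mem (k : ℕ) (r : Fin k → Fin ℓ) (c : Fin k → Fin ℓ') :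
    (Matrix.of fun i j => (X (r i, c j) : MvPolynomial (Fin ℓ × Fin ℓ') F)).det ∈
      Submodule.span F (minorSet F ℓ ℓ') := by
  by_cases hr : Function.Injective r
  · by_cases hc : Function.Injective c
    · obtain ⟨r', σ, hr', hrσ⟩ := exists_sorted r hr
      obtain ⟨c', τ, hc', hcτ⟩ := exists_sorted c hc
      have hM : (Matrix.of fun i j => (X (r i, c j) : MvPolynomial (Fin ℓ × Fin ℓ') F)) =
          ((Matrix.of fun i j =>
            (X (r' i, c' j) : MvPolynomial (Fin ℓ × Fin ℓ') F)).submatrix id τ).submatrix σ id := by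
        ext i j
        simp [hrσ, hcτ]
      have hmem : (Matrix.of fun i j =>
          (X (r' i, c' j) : MvPolynomial (Fin ℓ × Fin ℓ') F)).det ∈
          Submodule.span F (minorSet F ℓ ℓ') :=
        Submodule.subset_span ⟨k, r', c', hr', hc', rfl⟩
      rw [hM, Matrix.det_permute, Matrix.det_permute']
      rcases Int.units_eq_one_or (Equiv.Perm.sign σ) with h1 | h1 <;>
        rcases Int.units_eq_one_or (Equiv.Perm.sign τ) with h2 | h2 <;>
          simp only [h1, h2, Units.val_one, Units.val_neg, Int.cast_one, Int.cast_neg,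
            neg_mul, one_mul, mul_neg, neg_neg]
      · exact hmem
      · exact neg_mem hmem
      · exact neg_mem hmem
      · exact hmem
    · obtain ⟨a, b, hab, hne⟩ := Function.not_injective_iff.mp hc
      rw [Matrix.det_zero_of_column_eq hne (fun i => by simp [hab])]
      exact zero_mem _
  · obtain ⟨a, b, hab, hne⟩ := Function.not_injective_iff.mp hr
    rw [Matrix.det_zero_of_row_eq hne (funext fun j => by simp [hab])]
    exact zero_mem _

/-- Determinants of matrices each of whose columns is either a column of variables of the
generic matrix or a constant column lie in the span of the minors. -/
lemma det_mixed_mem : ∀ (k : ℕ) (r : Fin k → Fin ℓ) (t : Fin k → (Fin ℓ') ⊕ (Fin k → F)),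
    (Matrix.of fun i j => Sum.elim (fun s => (X (r i, s) : MvPolynomial (Fin ℓ × Fin ℓ') F))
      (fun g => C (g i)) (t j)).det ∈ Submodule.span F (minorSet F ℓ ℓ') := by
  intro k
  induction k with
  | zero =>
    intro r t
    rw [Matrix.det_fin_zero]
    exact Submodule.subset_span ⟨0, Fin.elim0, Fin.elim0, fun a => a.elim0, fun a => a.elim0,
      by simp [genMinor, Matrix.det_fin_zero]⟩
  | succ n ih =>
    intro r t
    by_cases h : ∃ j g, t j = Sum.inr g
    · obtain ⟨j0, g, hj0⟩ := h
      rw [Matrix.det_succ_column _ j0]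
      refine Submodule.sum_mem _ fun i0 _ => ?_
      have hsub : ((Matrix.of fun i j =>
            Sum.elim (fun s => (X (r i, s) : MvPolynomial (Fin ℓ × Fin ℓ') F))
              (fun g => C (g i)) (t j)).submatrix i0.succAbove j0.succAbove) =
          Matrix.of fun i j =>
            Sum.elim (fun s => (X ((r ∘ i0.succAbove) i, s) : MvPolynomial (Fin ℓ × Fin ℓ') F))
              (fun g => C (g i))
              ((Sum.map id (fun g => g ∘ i0.succAbove) ∘ (t ∘ j0.succAbove)) j) := by
        ext i j
        rcases ht : t (j0.succAbove j) with s | g' <;>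
          simp [Matrix.submatrix_apply, ht, Function.comp]
      have hd := ih (r ∘ i0.succAbove) (Sum.map id (fun g => g ∘ i0.succAbove) ∘ (t ∘ j0.succAbove))
      rw [← hsub] at hd
      have hentry : (Matrix.of fun i j =>
          Sum.elim (fun s => (X (r i, s) : MvPolynomial (Fin ℓ × Fin ℓ') F))
            (fun g => C (g i)) (t j)) i0 j0 = C (g i0) := by
        simp [hj0]
      rw [hentry]
      have : ((-1 : MvPolynomial (Fin ℓ × Fin ℓ') F) ^ ((i0 : ℕ) + (j0 : ℕ)) * C (g i0) *
          ((Matrix.of fun i j =>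
            Sum.elim (fun s => (X (r i, s) : MvPolynomial (Fin ℓ × Fin ℓ') F))
              (fun g => C (g i)) (t j)).submatrix i0.succAbove j0.succAbove).det) =
          (((-1 : F) ^ ((i0 : ℕ) + (j0 : ℕ)) * g i0) •
            ((Matrix.of fun i j =>
            Sum.elim (fun s => (X (r i, s) : MvPolynomial (Fin ℓ × Fin ℓ') F))
              (fun g => C (g i)) (t j)).submatrix i0.succAbove j0.succAbove).det) := by
        rw [smul_eq_C_mul, _root_.map_mul, map_pow, map_neg, C_1]
      rw [this]
      exact Submodule.smul_mem _ _ hd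
    · push_neg at h
      have hs : ∀ j, ∃ s, t j = Sum.inl s := by
        intro j
        rcases ht : t j with s | g
        · exact ⟨s, rfl⟩
        · exact absurd ht (h j g)
      choose s hs using hs
      have : (Matrix.of fun i j =>
          Sum.elim (fun s => (X (r i, s) : MvPolynomial (Fin ℓ × Fin ℓ') F))
            (fun g => C (g i)) (t j)) =
          Matrix.of fun i j => (X (r i, s j) : MvPolynomial (Fin ℓ × Fin ℓ') F) := by
        ext i j
        rw [Matrix.of_apply, hs j]
        rfl
      rw [this]
      exact det_X_mem _ r s

end AffSubstAux

/-- For every `A ∈ GL_{ℓ'}(F_q)` and `u ∈ M_{ℓ×ℓ'}(F_q)`, the substitution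
`X ↦ XA⁻¹ + u` maps the span `F(ℓ,m)` of the minors of `X` into itself. -/
theorem affSubst_mem_span_minorSet (F : Type*) [Field F] [Fintype F] (ℓ ℓ' : ℕ)
    (A : GL (Fin ℓ') F) (u : Matrix (Fin ℓ) (Fin ℓ') F)
    (f : MvPolynomial (Fin ℓ × Fin ℓ') F) (hf : f ∈ Submodule.span F (minorSet F ℓ ℓ')) :
    affSubst F ℓ ℓ' A u f ∈ Submodule.span F (minorSet F ℓ ℓ') := by
  classical
  set B : Matrix (Fin ℓ') (Fin ℓ') F := (↑(A⁻¹) : Matrix (Fin ℓ') (Fin ℓ') F) with hB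
  -- it suffices to treat a single minor
  have key : ∀ (k : ℕ) (r : Fin k → Fin ℓ) (c : Fin k → Fin ℓ'),
      affSubst F ℓ ℓ' A u (genMinor ℓ ℓ' k r c) ∈ Submodule.span F (minorSet F ℓ ℓ') := by
    intro k r c
    -- the substituted minor is the determinant of the matrix of substituted entries
    have h1 : affSubst F ℓ ℓ' A u (genMinor ℓ ℓ' k r c) =
        (Matrix.of fun i j =>
          (∑ s, X (r i, s) * C (B s (c j))) + C (u (r i) (c j)) :
            Matrix (Fin k) (Fin k) (MvPolynomial (Fin ℓ × Fin ℓ') F)).det := by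
      rw [genMinor, AlgHom.map_det]
      congr 1
      ext i j
      simp [affSubst, aeval_X, hB]
    rw [h1]
    set Fd := (Matrix.detRowAlternating (R := MvPolynomial (Fin ℓ × Fin ℓ') F)
      (n := Fin k)).toMultilinearMap with hFd
    set g : Fin k → Option (Fin ℓ') → (Fin k → MvPolynomial (Fin ℓ × Fin ℓ') F) :=
      fun j o => o.elim (fun i => C (u (r i) (c j)))
        (fun s i => X (r i, s) * C (B s (c j))) with hg
    set P : Matrix (Fin k) (Fin k) (MvPolynomial (Fin ℓ × Fin ℓ') F) :=
      Matrix.of fun i j => (∑ s, X (r i, s) * C (B s (c j))) + C (u (r i) (c j)) with hP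
    have hPt : Pᵀ = Matrix.of fun j i => (∑ o : Option (Fin ℓ'), g j o) i := by
      ext j i
      simp only [Matrix.transpose_apply, Matrix.of_apply, hP]
      rw [Finset.sum_apply, Fintype.sum_option]
      simp [hg, add_comm]
    have e1 : P.det = ∑ τ : Fin k → Option (Fin ℓ'), Fd (fun j => g j (τ j)) := by
      rw [← Matrix.det_transpose P, hPt]
      exact MultilinearMap.map_sum Fd g
    rw [e1]
    refine Submodule.sum_mem _ fun τ _ => ?_
    set a : Fin k → F := fun j => (τ j).elim 1 (fun s => B s (c j)) with ha
    set m : Fin k → (Fin k → MvPolynomial (Fin ℓ × Fin ℓ') F) :=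
      fun j => (τ j).elim (fun i => C (u (r i) (c j))) (fun s i => X (r i, s)) with hm
    have h3 : (fun j => g j (τ j)) =
        fun j => (C (a j) : MvPolynomial (Fin ℓ × Fin ℓ') F) • m j := by
      funext j
      rcases hτ : τ j with _ | s <;> funext i <;>
        simp [hg, ha, hm, hτ, mul_comm]
    set N : Matrix (Fin k) (Fin k) (MvPolynomial (Fin ℓ × Fin ℓ') F) :=
      Matrix.of fun i j => Sum.elim
        (fun s => (X (r i, s) : MvPolynomial (Fin ℓ × Fin ℓ') F))
        (fun g => C (g i))
        ((τ j).elim (Sum.inr fun i => u (r i) (c j)) Sum.inl) with hN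
    have hNt : Nᵀ = Matrix.of fun j i => m j i := by
      ext j i
      rcases hτ : τ j with _ | s <;> simp [hN, hm, hτ]
    have e2 : Fd (fun j => g j (τ j)) = (∏ j, a j) • N.det := by
      rw [h3, Fd.map_smul_univ]
      have hFm : Fd m = N.det := by
        rw [← Matrix.det_transpose N, hNt]
        rfl
      rw [hFm, smul_eq_mul, ← map_prod, ← smul_eq_C_mul]
    rw [e2]
    exact Submodule.smul_mem _ _ (AffSubstAux.det_mixed_mem k r _)
  -- conclude by span induction
  induction hf using Submodule.span_induction with
  | mem p hp =>
    obtain ⟨k, r, c, _, _, rfl⟩ := hp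
    exact key k r c
  | zero => simp only [map_zero]; exact zero_mem _
  | add x y _ _ hx hy => rw [map_add]; exact add_mem hx hy
  | smul a x _ hx => rw [_root_.map_smul]; exact Submodule.smul_mem _ _ hx
end

section
/- Let L = det((X_{ij})_{1≤i,j≤ℓ}) be the leading maximal minor of the generic ℓ×ℓ' matrix X, let M be an ℓ'×ℓ matrix over F_q of rank ℓ, and let m be an ℓ×ℓ matrix over F_q. Then det(XM + m) = L if and only if m = 0 and there exists a (necessarily unique) E ∈ SL_ℓ(F_q) such that ME equals the ℓ'×ℓ matrix whose top ℓ×ℓ block is the identity and whose bottom (ℓ'−ℓ)×ℓ block is zero. -/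
/-!
Specialising the indeterminates to an arbitrary matrix `A` over `F` turns the polynomial identity
into `det (A M + m) = det (A J)` for all `A`, where `J = (I; 0)`. As `M` has a left inverse `N`, the
choice `A = Y N` gives `det (Y + m) = c * det Y` for all square `Y`; with `Z = 1 - m`, comparing
`det (Z.updateRow i v + m) = v i + m i i` with `c * det (Z.updateRow i v)` at `v = 0` and at the
rows of `Z` forces `Z = 1`, i.e. `m = 0`. Then `T = Jᵀ M` has determinant `1`, and evaluating
`det (A M T⁻¹) = det (A J)` at `A = Jᵀ` with one row replaced by a unit vector reads off the entries of
`M T⁻¹`, so `M T⁻¹ = J`. Conversely `M E = J` gives `det (X M) = det (X M E) = det (X J)`.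
-/

open MvPolynomial

/-- The generic `ℓ × ℓ'` matrix of indeterminates. -/
noncomputable def genMatrixRect (F : Type*) [Field F] (ℓ ℓ' : ℕ) :
    Matrix (Fin ℓ) (Fin ℓ') (MvPolynomial (Fin ℓ × Fin ℓ') F) :=
  Matrix.of fun i j => X (i, j)

open Matrix

namespace Matrix

variable {n n' R : Type*} [Fintype n] [DecidableEq n] [Fintype n'] [CommRing R]

theorem det_one_updateRow (i : n) (v : n → R) : ((1 : Matrix n n R).updateRow i v).det = v i := by
  rw [← cramer_transpose_apply, transpose_one, cramer_one]
  rfl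

theorem eq_zero_of_forall_det_add_eq_det_mul {m : Matrix n n R} {c : R}
    (h : ∀ Y : Matrix n n R, (Y + m).det = Y.det * c) : m = 0 := by
  set Z := 1 - m
  have hc : Z.det * c = 1 := by rw [← h, sub_add_cancel, det_one]
  have hrow : ∀ i v, v i + m i i = Zᵀ.cramer v i * c := fun i v => by
    have : Z.updateRow i v + m = (1 : Matrix n n R).updateRow i (v + m i) := by
      ext j k
      rcases eq_or_ne j i with rfl | hj <;> simp [Z, *]
    rw [cramer_transpose_apply, ← h, this, det_one_updateRow, Pi.add_apply]
  ext i k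
  have hdiag : m k k = 0 := by simpa using hrow k 0
  have hZ : Z i k = (1 : Matrix n n R) i k := by
    rw [← add_zero (Z i k), ← hdiag, hrow, cramer_transpose_row_self, one_eq_pi_single]
    simp [Pi.single_apply, hc]
  simpa [Z] using hZ

theorem eq_zero_of_forall_det_mul_add_eq {M J : Matrix n' n R}
    {N : Matrix n n' R} {m : Matrix n n R} (hNM : N * M = 1)
    (h : ∀ A : Matrix n n' R, (A * M + m).det = (A * J).det) : m = 0 :=
  eq_zero_of_forall_det_add_eq_det_mul (c := (N * J).det) fun Y => by
    simpa only [Matrix.mul_assoc, hNM, Matrix.mul_one, det_mul] using h (Y * N)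

theorem det_mul_eq_of_mul_eq {M J : Matrix n' n R} {E : Matrix n n R}
    (hME : M * E = J) (hE : E.det = 1) (Y : Matrix n n' R) : (Y * M).det = (Y * J).det := by
  rw [← hME, ← Matrix.mul_assoc, det_mul, hE, mul_one]

variable [DecidableEq n']

theorem eq_of_forall_det_mul_eq {M J : Matrix n' n R} {P : Matrix n n' R}
    (hPM : P * M = 1) (hPJ : P * J = 1) (h : ∀ A : Matrix n n' R, (A * M).det = (A * J).det) :
    M = J := by
  ext i k
  have key : ∀ N : Matrix n' n R, P * N = 1 → ((P.updateRow k (Pi.single i 1)) * N).det = N i k :=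
    fun N hN => by rw [updateRow_mul, hN, single_vecMul, one_smul, det_one_updateRow]; rfl
  rw [← key M hPM, ← key J hPJ, h]

theorem existsUnique_det_eq_one_mul_eq {M J : Matrix n' n R} {P : Matrix n n' R}
    (hPJ : P * J = 1) (h : ∀ A : Matrix n n' R, (A * M).det = (A * J).det) :
    ∃! E : Matrix n n R, E.det = 1 ∧ M * E = J := by
  set T := P * M
  have hT : T.det = 1 := by rw [h, hPJ, det_one]
  have hTunit : IsUnit T.det := hT ▸ isUnit_one
  refine ⟨T⁻¹, ⟨by rw [det_nonsing_inv, hT, Ring.inverse_one], ?_⟩, ?_⟩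
  · refine eq_of_forall_det_mul_eq (P := P) ?_ hPJ fun A => ?_
    · rw [← Matrix.mul_assoc, mul_nonsing_inv _ hTunit]
    · rw [← Matrix.mul_assoc, det_mul, h, det_nonsing_inv, hT, Ring.inverse_one, mul_one]
  · rintro E ⟨-, hME⟩
    exact (inv_eq_right_inv (by rw [Matrix.mul_assoc, hME, hPJ])).symm

end Matrix

theorem Matrix.exists_mul_eq_one_of_rank_eq {K m n : Type*} [Field K] [Fintype m] [Fintype n]
    [DecidableEq n] {M : Matrix m n K} (hM : M.rank = Fintype.card n) :
    ∃ N : Matrix n m K, N * M = 1 := by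
  rw [← vecMul_surjective_iff_exists_left_inverse]
  have hrange : LinearMap.range (Mᵀ).mulVecLin = ⊤ := by
    apply Submodule.eq_top_of_finrank_eq
    rw [← rank, rank_transpose, hM, Module.finrank_fintype_fun_eq_card]
  intro v
  obtain ⟨w, hw⟩ := LinearMap.range_eq_top.mp hrange v
  exact ⟨w, by rwa [mulVecLin_apply, mulVec_transpose] at hw⟩

def topIdentity (R : Type*) [Zero R] [One R] (ℓ' ℓ : ℕ) : Matrix (Fin ℓ') (Fin ℓ) R :=
  Matrix.of fun i j => if (i : ℕ) = (j : ℕ) then 1 else 0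

section topIdentity

variable {R : Type*} [Semiring R] {ℓ ℓ' : ℕ}

@[simp]
theorem topIdentity_apply (i : Fin ℓ') (j : Fin ℓ) :
    topIdentity R ℓ' ℓ i j = if (i : ℕ) = (j : ℕ) then 1 else 0 := rfl

theorem map_topIdentity {S : Type*} [Semiring S] (f : R →+* S) :
    (topIdentity R ℓ' ℓ).map f = topIdentity S ℓ' ℓ := by
  ext i j; simp [apply_ite f]

theorem mul_topIdentity {ι : Type*} (h : ℓ ≤ ℓ') (Y : Matrix ι (Fin ℓ') R) :
    Y * topIdentity R ℓ' ℓ = Y.submatrix id (Fin.castLE h) := by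
  ext i j
  rw [mul_apply, Finset.sum_eq_single (Fin.castLE h j)]
  · simp
  · intro k _ hk
    simp [show (k : ℕ) ≠ j from fun e => hk (Fin.ext e)]
  · simp

theorem topIdentity_transpose_mul_self (h : ℓ ≤ ℓ') :
    (topIdentity R ℓ' ℓ)ᵀ * topIdentity R ℓ' ℓ = 1 := by
  rw [mul_topIdentity h]
  ext i j; simp [one_apply, Fin.ext_iff, eq_comm]

end topIdentity

theorem genMatrixRect_map_eval {F : Type*} [Field F] {ℓ ℓ' : ℕ} (A : Matrix (Fin ℓ) (Fin ℓ') F) :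
    (genMatrixRect F ℓ ℓ').map (eval fun p => A p.1 p.2) = A := by
  ext i j; simp [genMatrixRect]

theorem eval_det_genMatrixRect_mul_add {F : Type*} [Field F] {ℓ ℓ' : ℕ}
    (M : Matrix (Fin ℓ') (Fin ℓ) F) (m : Matrix (Fin ℓ) (Fin ℓ) F) (A : Matrix (Fin ℓ) (Fin ℓ') F) :
    -- Without the ascription on `C`, `*` elaborates through `CStarMatrix`'s `HMul` instance (as in
    -- the main theorem, which therefore uses this lemma up to definitional unfolding only).
    eval (fun p => A p.1 p.2)
        (genMatrixRect F ℓ ℓ' * M.map (C : F →+* MvPolynomial (Fin ℓ × Fin ℓ') F) + m.map C).det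
      = (A * M + m).det := by
  rw [RingHom.map_det, RingHom.mapMatrix_apply, Matrix.map_add _ (map_add _), Matrix.map_mul,
    genMatrixRect_map_eval, Matrix.map_map, Matrix.map_map]
  simp [Function.comp_def]

theorem eval_det_genMatrixRect_submatrix {F : Type*} [Field F] {ℓ ℓ' : ℕ} (h : ℓ ≤ ℓ')
    (A : Matrix (Fin ℓ) (Fin ℓ') F) :
    eval (fun p => A p.1 p.2) ((genMatrixRect F ℓ ℓ').submatrix id (Fin.castLE h)).det
      = (A.submatrix id (Fin.castLE h)).det := by
  rw [RingHom.map_det, RingHom.mapMatrix_apply, ← submatrix_map, genMatrixRect_map_eval]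

theorem det_mul_add_eq_leading_minor_iff_general (F : Type*) [Field F]
    (ℓ ℓ' : ℕ) (hℓℓ' : ℓ ≤ ℓ')
    (M : Matrix (Fin ℓ') (Fin ℓ) F) (hM : M.rank = ℓ) (m : Matrix (Fin ℓ) (Fin ℓ) F) :
    (genMatrixRect F ℓ ℓ' * M.map C + m.map C).det
        = ((genMatrixRect F ℓ ℓ').submatrix id (Fin.castLE hℓℓ')).det
      ↔ (m = 0 ∧ ∃! E : Matrix (Fin ℓ) (Fin ℓ) F, E.det = 1 ∧
          ∀ (i : Fin ℓ') (j : Fin ℓ), (M * E) i j = if (i : ℕ) = (j : ℕ) then 1 else 0) := by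
  have hJ (E : Matrix (Fin ℓ) (Fin ℓ) F) :
      (∀ i j, (M * E) i j = if (i : ℕ) = (j : ℕ) then 1 else 0) ↔ M * E = topIdentity F ℓ' ℓ :=
    Matrix.ext_iff
  simp only [hJ]
  constructor
  · intro h
    have hA (A : Matrix (Fin ℓ) (Fin ℓ') F) : (A * M + m).det = (A * topIdentity F ℓ' ℓ).det := by
      rw [mul_topIdentity hℓℓ', ← eval_det_genMatrixRect_mul_add, ← eval_det_genMatrixRect_submatrix]
      exact congrArg _ h
    obtain ⟨N, hN⟩ := exists_mul_eq_one_of_rank_eq (hM.trans (Fintype.card_fin ℓ).symm)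
    obtain rfl := eq_zero_of_forall_det_mul_add_eq hN hA
    exact ⟨rfl, existsUnique_det_eq_one_mul_eq (topIdentity_transpose_mul_self hℓℓ')
      (by simpa using hA)⟩
  · rintro ⟨rfl, E, ⟨hE, hME⟩, -⟩
    rw [Matrix.map_zero _ (map_zero C), add_zero, ← mul_topIdentity hℓℓ']
    refine det_mul_eq_of_mul_eq (E := E.map C) ?_ ?_ _
    · rw [← Matrix.map_mul, hME, map_topIdentity]
    · rw [← RingHom.mapMatrix_apply, ← RingHom.map_det, hE, map_one]

/-- Let `L` be the leading maximal minor of the generic `ℓ × ℓ'` matrix `X`, let `M` be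
an `ℓ' × ℓ` matrix over `F_q` of rank `ℓ` and `m` an `ℓ × ℓ` matrix over `F_q`. Then
`det(XM + m) = L` iff `m = 0` and there is a (necessarily unique) `E ∈ SL_ℓ(F_q)` with
`ME = (I_ℓ | 0)ᵀ` (identity on top, zero below). -/
theorem det_mul_add_eq_leading_minor_iff (F : Type*) [Field F] [Fintype F]
    (ℓ ℓ' : ℕ) (hℓ : 1 ≤ ℓ) (hℓℓ' : ℓ ≤ ℓ')
    (M : Matrix (Fin ℓ') (Fin ℓ) F) (hM : M.rank = ℓ) (m : Matrix (Fin ℓ) (Fin ℓ) F) :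
    (genMatrixRect F ℓ ℓ' * M.map C + m.map C).det
        = ((genMatrixRect F ℓ ℓ').submatrix id (Fin.castLE hℓℓ')).det
      ↔ (m = 0 ∧ ∃! E : Matrix (Fin ℓ) (Fin ℓ) F, E.det = 1 ∧
          ∀ (i : Fin ℓ') (j : Fin ℓ), (M * E) i j = if (i : ℕ) = (j : ℕ) then 1 else 0) :=
  det_mul_add_eq_leading_minor_iff_general F ℓ ℓ' hℓℓ' M hM m
end

section
/- The stabilizer in the group G(ℓ,m) = {φ_{u,A}} of the leading maximal minor L = det((X_{ij})_{1≤i,j≤ℓ}) has cardinality (q^{ℓ(ℓ'−ℓ)}/(q−1))·∏_{i=ℓ}^{ℓ'−1}(q^{ℓ'} − q^i)·∏_{j=0}^{ℓ−1}(q^ℓ − q^j). -/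
open MvPolynomial Matrix

open MvPolynomial Matrix

/-!
Split the generic matrix as `X = (X₁ | X₂)` after column `ℓ`, and let `C`, `D`, `u₁` be the blocks
of `A⁻¹` and `u` feeding the first `ℓ` columns, so that the substitution sends `L = det X₁` to
`det (X₁ C + X₂ D + u₁)`. This equals `det X₁` exactly when `det C = 1`, `D = 0` and `u₁ = 0`:
specialising to `X₁ = t I`, `X₂ = 0` and comparing leading coefficients in `t` gives `det C = 1`;
then `det (N + Y₂ D + u₁) = det N` for all `N` and `Y₂`, while every nonzero `w` admits a singular
`N` with `N + w` invertible (take `N = T - w` for an invertible `T` agreeing with `w` on a vector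
that `w` does not kill), so `Y₂ D + u₁ = 0` for all `Y₂`. The stabilizer is thus a block triangular
subgroup of `GL_{ℓ'}` times a space of matrices `u`, and its size follows from
`|GL_ℓ| = (q - 1) |SL_ℓ|`.
-/

universe u

section ShiftedDeterminant

variable {F : Type u} [Field F] {m : Type*} [Fintype m] [DecidableEq m]

theorem exists_isUnit_det_mulVec_eq {x y : m → F} (hx : x ≠ 0) (hy : y ≠ 0) :
    ∃ T : Matrix m m F, IsUnit T.det ∧ T *ᵥ x = y := by
  obtain ⟨g, hg⟩ := Submodule.exists_linearEquiv_restrict_eq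
    ((LinearEquiv.coord F _ x hx).trans (LinearEquiv.toSpanNonzeroSingleton F _ y hy))
  refine ⟨LinearMap.toMatrix' (g : (m → F) →ₗ[F] m → F), ?_, ?_⟩
  · rw [LinearMap.det_toMatrix']
    exact LinearEquiv.isUnit_det' g
  · have hgx := hg ⟨x, Submodule.mem_span_singleton_self x⟩
    rw [LinearEquiv.trans_apply, LinearEquiv.coord_self,
      LinearEquiv.toSpanNonzeroSingleton_one] at hgx
    simpa using hgx.symm

theorem eq_zero_of_forall_det_add_eq {w : Matrix m m F} (h : ∀ N, (N + w).det = N.det) :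
    w = 0 := by
  by_contra hw
  obtain ⟨j, hj⟩ : ∃ j, w *ᵥ Pi.single j 1 ≠ 0 := by
    by_contra! hcol
    exact hw (Matrix.ext fun i j => by simpa using congrFun (hcol j) i)
  have hej : (Pi.single j 1 : m → F) ≠ 0 := Pi.single_ne_zero_iff.mpr one_ne_zero
  obtain ⟨T, hT, hTj⟩ := exists_isUnit_det_mulVec_eq hej hj
  have hsing : (T - w).det = 0 :=
    Matrix.exists_mulVec_eq_zero_iff.mp ⟨_, hej, by rw [sub_mulVec, hTj, sub_self]⟩
  rw [← h (T - w), sub_add_cancel] at hsing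
  exact hT.ne_zero hsing

variable {k : Type*} [Fintype k] [DecidableEq k] [Nonempty m]

theorem eq_zero_of_forall_det_mul_add_mul_add_eq {C : Matrix m m F} {D : Matrix k m F}
    {w : Matrix m m F} (hC : C.det = 1)
    (h : ∀ (Y₁ : Matrix m m F) (Y₂ : Matrix m k F), (Y₁ * C + Y₂ * D + w).det = Y₁.det) :
    D = 0 ∧ w = 0 := by
  have hshift (Y₂ : Matrix m k F) : Y₂ * D + w = 0 := by
    refine eq_zero_of_forall_det_add_eq fun N => ?_
    have hCu : IsUnit C.det := hC ▸ isUnit_one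
    simpa [add_assoc, Matrix.nonsing_inv_mul_cancel_right _ _ hCu, Matrix.det_nonsing_inv, hC]
      using h (N * C⁻¹) Y₂
  have hw : w = 0 := by simpa using hshift 0
  refine ⟨Matrix.ext fun x j => ?_, hw⟩
  obtain ⟨i⟩ := ‹Nonempty m›
  simpa [hw] using congrFun₂ (hshift (Matrix.single i x 1)) i j

theorem forall_det_mul_add_mul_add_eq_iff (C : Matrix m m F) (D : Matrix k m F)
    (w : Matrix m m F) :
    (∀ (R : Type u) [CommRing R] [Algebra F R] (Y₁ : Matrix m m R) (Y₂ : Matrix m k R),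
      (Y₁ * C.map (algebraMap F R) + Y₂ * D.map (algebraMap F R) + w.map (algebraMap F R)).det
        = Y₁.det) ↔ C.det = 1 ∧ D = 0 ∧ w = 0 := by
  constructor
  · intro h
    have hC : C.det = 1 := by
      have hX := h (Polynomial F) ((Polynomial.X : Polynomial F) • 1) 0
      simp only [Matrix.smul_mul, Matrix.one_mul, Matrix.zero_mul, add_zero, Matrix.det_smul,
        Matrix.det_one, mul_one, Polynomial.algebraMap_eq] at hX
      simpa [hX] using (Polynomial.coeff_det_X_add_C_card C w).symm
    exact ⟨hC, eq_zero_of_forall_det_mul_add_mul_add_eq hC fun Y₁ Y₂ => by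
      simpa using h F Y₁ Y₂⟩
  · rintro ⟨hC, rfl, rfl⟩ R _ _ Y₁ Y₂
    simp only [map_zero, Matrix.map_zero, Matrix.mul_zero, add_zero, det_mul]
    rw [← RingHom.mapMatrix_apply, ← RingHom.map_det, hC, map_one, mul_one]

end ShiftedDeterminant

section Blocks

variable {α : Type*} {p m k n : Type*} (σ : m ⊕ k ≃ n)

theorem mul_eq_add_submatrix_mul {o : Type*} [Fintype m] [Fintype k] [Fintype n]
    [NonUnitalNonAssocSemiring α] (Y : Matrix p n α) (M : Matrix n o α) :
    Y * M = Y.submatrix id (σ ∘ Sum.inl) * M.submatrix (σ ∘ Sum.inl) id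
      + Y.submatrix id (σ ∘ Sum.inr) * M.submatrix (σ ∘ Sum.inr) id := by
  ext i j
  simp [Matrix.mul_apply, ← σ.sum_comp, Fintype.sum_sum_type]

theorem exists_submatrix_inl_inr (Y₁ : Matrix p m α) (Y₂ : Matrix p k α) :
    ∃ Y : Matrix p n α, Y.submatrix id (σ ∘ Sum.inl) = Y₁ ∧ Y.submatrix id (σ ∘ Sum.inr) = Y₂ :=
  ⟨(fromCols Y₁ Y₂).submatrix id σ.symm, by ext; simp, by ext; simp⟩

theorem forall_det_mul_add_eq_det_submatrix_iff {F : Type u} [Field F] [Fintype m]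
    [DecidableEq m] [Nonempty m] [Fintype k] [DecidableEq k] [Fintype n]
    (M : Matrix n m F) (w : Matrix m m F) :
    (∀ (R : Type u) [CommRing R] [Algebra F R] (Y : Matrix m n R),
      (Y * M.map (algebraMap F R) + w.map (algebraMap F R)).det
        = (Y.submatrix id (σ ∘ Sum.inl)).det) ↔
      (M.submatrix (σ ∘ Sum.inl) id).det = 1 ∧ M.submatrix (σ ∘ Sum.inr) id = 0 ∧ w = 0 := by
  rw [← forall_det_mul_add_mul_add_eq_iff]
  refine forall_congr' fun R => ⟨fun h _ _ Y₁ Y₂ => ?_, fun h _ _ Y => ?_⟩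
  · obtain ⟨Y, rfl, rfl⟩ := exists_submatrix_inl_inr σ Y₁ Y₂
    rw [← h, mul_eq_add_submatrix_mul σ, submatrix_map, submatrix_map]
  · rw [mul_eq_add_submatrix_mul σ, submatrix_map, submatrix_map]
    exact h _ _

end Blocks

section Substitution

variable {F : Type u} [Field F] {ℓ ℓ' : ℕ}

theorem map_genMatrixRect_aeval {R : Type*} [CommRing R] [Algebra F R]
    (Y : Matrix (Fin ℓ) (Fin ℓ') R) :
    (genMatrixRect F ℓ ℓ').map (aeval fun x => Y x.1 x.2) = Y := by
  ext
  simp [genMatrixRect]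

theorem map_genMatrixRect_affSubst (A : GL (Fin ℓ') F) (u : Matrix (Fin ℓ) (Fin ℓ') F) :
    (genMatrixRect F ℓ ℓ').map (affSubst F ℓ ℓ' A u)
      = genMatrixRect F ℓ ℓ' * (↑A⁻¹ : Matrix (Fin ℓ') (Fin ℓ') F).map
          (C : F →+* MvPolynomial (Fin ℓ × Fin ℓ') F) + u.map C :=
  Matrix.ext fun i j => by simp [affSubst, Matrix.mul_apply, genMatrixRect]

theorem map_genMatrixRect_aeval_comp_affSubst {R : Type*} [CommRing R] [Algebra F R]
    (Y : Matrix (Fin ℓ) (Fin ℓ') R) (A : GL (Fin ℓ') F) (u : Matrix (Fin ℓ) (Fin ℓ') F) :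
    (genMatrixRect F ℓ ℓ').map ((aeval fun x => Y x.1 x.2).comp (affSubst F ℓ ℓ' A u))
      = Y * (↑A⁻¹ : Matrix (Fin ℓ') (Fin ℓ') F).map (algebraMap F R) + u.map (algebraMap F R) :=
  Matrix.ext fun i j => by simp [genMatrixRect, affSubst, Matrix.mul_apply]

theorem affSubst_det_submatrix_eq_iff (e : Fin ℓ → Fin ℓ') (A : GL (Fin ℓ') F)
    (u : Matrix (Fin ℓ) (Fin ℓ') F) :
    affSubst F ℓ ℓ' A u ((genMatrixRect F ℓ ℓ').submatrix id e).det
        = ((genMatrixRect F ℓ ℓ').submatrix id e).det ↔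
      ∀ (R : Type u) [CommRing R] [Algebra F R] (Y : Matrix (Fin ℓ) (Fin ℓ') R),
        (Y * ((↑A⁻¹ : Matrix (Fin ℓ') (Fin ℓ') F).submatrix id e).map (algebraMap F R)
          + (u.submatrix id e).map (algebraMap F R)).det = (Y.submatrix id e).det := by
  have hmap {R : Type u} [CommRing R] [Algebra F R]
      (φ : MvPolynomial (Fin ℓ × Fin ℓ') F →ₐ[F] R) :
      φ ((genMatrixRect F ℓ ℓ').submatrix id e).det
        = (((genMatrixRect F ℓ ℓ').map φ).submatrix id e).det := by
    rw [AlgHom.map_det]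
    rfl
  constructor
  · intro h R _ _ Y
    have hY := congrArg (aeval fun x => Y x.1 x.2) h
    rwa [← AlgHom.comp_apply, hmap, hmap, map_genMatrixRect_aeval_comp_affSubst,
      map_genMatrixRect_aeval] at hY
  · intro h
    rw [hmap, map_genMatrixRect_affSubst]
    exact h _ (genMatrixRect F ℓ ℓ')

/-- The matrices `B` for which `X ↦ X B` fixes the minor of `X` on the columns `σ ∘ Sum.inl`. -/
def IsLeadingMinorStabilizer {R m k n : Type*} [CommRing R] [Fintype m] [DecidableEq m]
    (σ : m ⊕ k ≃ n) (B : Matrix n n R) : Prop :=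
  (B.submatrix (σ ∘ Sum.inl) (σ ∘ Sum.inl)).det = 1 ∧
    B.submatrix (σ ∘ Sum.inr) (σ ∘ Sum.inl) = 0

theorem affSubst_det_submatrix_eq_iff_isLeadingMinorStabilizer {k : Type*} [Fintype k]
    [DecidableEq k] [NeZero ℓ] (σ : Fin ℓ ⊕ k ≃ Fin ℓ') (A : GL (Fin ℓ') F)
    (u : Matrix (Fin ℓ) (Fin ℓ') F) :
    affSubst F ℓ ℓ' A u ((genMatrixRect F ℓ ℓ').submatrix id (σ ∘ Sum.inl)).det
        = ((genMatrixRect F ℓ ℓ').submatrix id (σ ∘ Sum.inl)).det ↔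
      IsLeadingMinorStabilizer σ (↑A⁻¹ : Matrix (Fin ℓ') (Fin ℓ') F) ∧
        u.submatrix id (σ ∘ Sum.inl) = 0 := by
  rw [affSubst_det_submatrix_eq_iff, forall_det_mul_add_eq_det_submatrix_iff σ]
  exact and_assoc.symm

end Substitution

section Counting

theorem Nat.card_matrix {m n α : Type*} [Fintype m] [Fintype n] :
    Nat.card (Matrix m n α) = Nat.card α ^ (Nat.card m * Nat.card n) := by
  rw [Matrix, Nat.card_fun, Nat.card_fun, ← pow_mul, mul_comm]

theorem Nat.card_subtype_inv_fst_and_snd {G β : Type*} [Group G] (P : G → Prop)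
    (Q : β → Prop) :
    Nat.card {x : G × β // P x.1⁻¹ ∧ Q x.2} = Nat.card {g // P g} * Nat.card {b // Q b} := by
  rw [← Nat.card_prod]
  exact Nat.card_congr <| (Equiv.subtypeEquiv ((Equiv.inv G).prodCongr (Equiv.refl β))
    fun _ => Iff.rfl).trans Equiv.subtypeProdEquivProd

theorem card_submatrix_inl_eq_zero {α p m k n : Type*} [Zero α] [Fintype p] [Fintype k]
    (σ : m ⊕ k ≃ n) :
    Nat.card {u : Matrix p n α // u.submatrix id (σ ∘ Sum.inl) = 0}
      = Nat.card α ^ (Nat.card p * Nat.card k) := by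
  rw [← Nat.card_matrix]
  exact Nat.card_congr
    { toFun u := u.1.submatrix id (σ ∘ Sum.inr)
      invFun Z := ⟨(fromCols 0 Z).submatrix id σ.symm, by ext; simp⟩
      left_inv u := by
        ext i j
        obtain ⟨j | j, rfl⟩ := σ.surjective j
        · simpa using (congrFun₂ u.2 i j).symm
        · simp
      right_inv Z := by ext; simp }

variable {F : Type*} [Field F]

theorem card_GL_eq_mul_card_SL {m : Type*} [Fintype m] [DecidableEq m] [Nonempty m] :
    Nat.card (GL m F) = (Nat.card F - 1) * Nat.card (SpecialLinearGroup m F) := by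
  have hker : Nat.card (GeneralLinearGroup.det : GL m F →* Fˣ).ker
      = Nat.card (SpecialLinearGroup m F) :=
    Nat.card_congr
      { toFun g := ⟨g.1, congrArg Units.val (MonoidHom.mem_ker.mp g.2)⟩
        invFun A := ⟨SpecialLinearGroup.toGL A, MonoidHom.mem_ker.mpr (Units.ext A.2)⟩
        left_inv g := Subtype.ext (Units.ext rfl)
        right_inv A := Subtype.ext rfl }
  rw [← Subgroup.card_mul_index (GeneralLinearGroup.det : GL m F →* Fˣ).ker, Subgroup.index_ker,
    MonoidHom.range_eq_top_of_surjective _ GeneralLinearGroup.det_surjective, Subgroup.card_top,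
    Nat.card_units, hker, mul_comm]

variable {m k : Type*} [Fintype m] [DecidableEq m] [Fintype k] [DecidableEq k]

theorem card_GL_blockTriangular :
    Nat.card {B : GL (m ⊕ k) F // (B : Matrix (m ⊕ k) (m ⊕ k) F).toBlocks₁₁.det = 1 ∧
        (B : Matrix (m ⊕ k) (m ⊕ k) F).toBlocks₂₁ = 0}
      = Nat.card (SpecialLinearGroup m F) * Nat.card F ^ (Nat.card m * Nat.card k)
        * Nat.card (GL k F) := by
  have hdet (B : Matrix (m ⊕ k) (m ⊕ k) F) (h₁₁ : B.toBlocks₁₁.det = 1)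
      (h₂₁ : B.toBlocks₂₁ = 0) : B.det = B.toBlocks₂₂.det := by
    rw [← fromBlocks_toBlocks B, h₂₁, det_fromBlocks_zero₂₁, h₁₁, one_mul]
    simp
  let blocks : {B : GL (m ⊕ k) F // (B : Matrix (m ⊕ k) (m ⊕ k) F).toBlocks₁₁.det = 1 ∧
        (B : Matrix (m ⊕ k) (m ⊕ k) F).toBlocks₂₁ = 0}
      ≃ SpecialLinearGroup m F × Matrix m k F × GL k F :=
    { toFun B := (⟨_, B.2.1⟩, (B.1 : Matrix (m ⊕ k) (m ⊕ k) F).toBlocks₁₂,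
        GeneralLinearGroup.mkOfDetNeZero _
          (hdet _ B.2.1 B.2.2 ▸ GeneralLinearGroup.det_ne_zero B.1))
      invFun T := ⟨GeneralLinearGroup.mkOfDetNeZero (fromBlocks T.1 T.2.1 0 T.2.2)
          (by simpa [det_fromBlocks_zero₂₁] using GeneralLinearGroup.det_ne_zero T.2.2),
        by simp⟩
      left_inv B := by
        ext : 2
        simp [← B.2.2, fromBlocks_toBlocks]
      right_inv T := by
        ext <;> simp }
  rw [Nat.card_congr blocks, Nat.card_prod, Nat.card_prod, Nat.card_matrix, mul_assoc]

theorem card_isLeadingMinorStabilizer {n : Type*} [Fintype n] [DecidableEq n]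
    (σ : m ⊕ k ≃ n) :
    Nat.card {B : GL n F // IsLeadingMinorStabilizer σ (B : Matrix n n F)}
      = Nat.card (SpecialLinearGroup m F) * Nat.card F ^ (Nat.card m * Nat.card k)
        * Nat.card (GL k F) := by
  rw [← card_GL_blockTriangular]
  exact Nat.card_congr <| Equiv.subtypeEquiv
    (Units.mapEquiv (reindexAlgEquiv F F σ.symm).toMulEquiv) fun _ => Iff.rfl

end Counting

theorem prod_Ico_pow_sub_pow (q ℓ k : ℕ) :
    ∏ i ∈ Finset.Ico ℓ (ℓ + k), (q ^ (ℓ + k) - q ^ i)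
      = q ^ (ℓ * k) * ∏ i ∈ Finset.range k, (q ^ k - q ^ i) := by
  have hfactor (i : ℕ) : q ^ (ℓ + k) - q ^ (ℓ + i) = q ^ ℓ * (q ^ k - q ^ i) := by
    rw [Nat.mul_sub, ← pow_add, ← pow_add]
  rw [Finset.prod_Ico_eq_prod_range, Nat.add_sub_cancel_left,
    Finset.prod_congr rfl fun i _ => hfactor i, Finset.prod_mul_distrib, Finset.prod_const,
    Finset.card_range, ← pow_mul]

/-- The stabilizer, in the group of affine substitutions `X ↦ XA⁻¹ + u`, of the
leading maximal minor `L = det((X_{ij})_{1≤i,j≤ℓ})` has cardinality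
`q^{ℓ(ℓ'-ℓ)}/(q-1) · ∏_{i=ℓ}^{ℓ'-1}(q^{ℓ'}-q^i) · ∏_{j=0}^{ℓ-1}(q^ℓ-q^j)`. -/
theorem card_stabilizer_leading_minor (F : Type*) [Field F] [Fintype F]
    (q ℓ ℓ' : ℕ) (hq : Fintype.card F = q) (hℓ : 1 ≤ ℓ) (hℓℓ' : ℓ ≤ ℓ') :
    (q - 1) * Nat.card {p : GL (Fin ℓ') F × Matrix (Fin ℓ) (Fin ℓ') F //
        affSubst F ℓ ℓ' p.1 p.2
            (((genMatrixRect F ℓ ℓ').submatrix id (Fin.castLE hℓℓ')).det)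
          = ((genMatrixRect F ℓ ℓ').submatrix id (Fin.castLE hℓℓ')).det}
      = q ^ (ℓ * (ℓ' - ℓ)) * (∏ i ∈ Finset.Ico ℓ ℓ', (q ^ ℓ' - q ^ i))
          * ∏ j ∈ Finset.range ℓ, (q ^ ℓ - q ^ j) := by
  obtain ⟨k, rfl⟩ := Nat.exists_eq_add_of_le hℓℓ'
  have : NeZero ℓ := ⟨by omega⟩
  have hGL (n : ℕ) : Nat.card (GL (Fin n) F) = ∏ i ∈ Finset.range n, (q ^ n - q ^ i) := by
    rw [Matrix.card_GL_field, hq, Fin.prod_univ_eq_prod_range (fun i => q ^ n - q ^ i)]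
  have hstab (p : GL (Fin (ℓ + k)) F × Matrix (Fin ℓ) (Fin (ℓ + k)) F) :=
    affSubst_det_submatrix_eq_iff_isLeadingMinorStabilizer finSumFinEquiv p.1 p.2
  rw [show Fin.castLE hℓℓ' = finSumFinEquiv ∘ Sum.inl from rfl,
    Nat.card_congr (Equiv.subtypeEquivRight hstab),
    Nat.card_subtype_inv_fst_and_snd
      (fun B : GL (Fin (ℓ + k)) F => IsLeadingMinorStabilizer finSumFinEquiv
        (B : Matrix (Fin (ℓ + k)) (Fin (ℓ + k)) F))
      (fun u : Matrix (Fin ℓ) (Fin (ℓ + k)) F => u.submatrix id (finSumFinEquiv ∘ Sum.inl) = 0),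
    card_isLeadingMinorStabilizer, card_submatrix_inl_eq_zero, Nat.add_sub_cancel_left,
    prod_Ico_pow_sub_pow, ← hGL, ← hGL, card_GL_eq_mul_card_SL (m := Fin ℓ)]
  simp only [Nat.card_eq_fintype_card, Fintype.card_fin, hq]
  ring
end
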